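/- arXiv:0903.2101 — 6 statements merged into one kernel-verified Lean document; each statement's English description precedes it below -/
import Mathlib

section
/- Let D be a commutative semigroup and K a commutative ring. A map χ : D × D → K satisfies the colour-factor condition, i.e. χ(β₁,α₂)·χ(β₁+β₂,α₃) = χ(β₂,α₃)·χ(β₁,α₂+α₃) for all α₂,α₃,β₁,β₂ ∈ D, if and only if for all D-graded associative K-algebras A and B, the product on A ⊗ B defined on homogeneous elements by (x₁⊗y₁)(x₂⊗y₂) = χ(deg y₁, deg x₂)·(x₁x₂ ⊗ y₁y₂) is associative. -/
open TensorProduct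

section Aux

variable {K : Type*} {D : Type*} [CommRing K] [AddCommSemigroup D] [DecidableEq D]

theorem aux_grade_mul_mem {α β : D} {a a' : AddMonoidAlgebra K D}
    (ha : a ∈ AddMonoidAlgebra.grade K α) (ha' : a' ∈ AddMonoidAlgebra.grade K β) :
    a * a' ∈ AddMonoidAlgebra.grade K (α + β) := by
  intro c hc
  obtain ⟨ma, hma, mb, hmb, rfl⟩ : ∃ y ∈ a.coeff.support, ∃ z ∈ a'.coeff.support, y + z = c :=
    Finset.mem_add.1 <| AddMonoidAlgebra.support_coeff_mul_subset a a' hc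
  have h1 := ha ma hma
  have h2 := ha' mb hmb
  simp only [id] at h1 h2
  simp [h1, h2]

theorem aux_grade_isInternal :
    DirectSum.IsInternal (fun α : D => (AddMonoidAlgebra.grade K α :
      Submodule K (AddMonoidAlgebra K D))) := by
  rw [DirectSum.isInternal_submodule_iff_iSupIndep_and_iSup_eq_top]
  have hl : ∀ a : D, LinearMap.range (AddMonoidAlgebra.lsingle (R := K) (S := K) a) =
      (LinearMap.range (Finsupp.lsingle (R := K) (M := K) a)).map
        (AddMonoidAlgebra.coeffLinearEquiv K (S := K) (M := D)).symm.toLinearMap :=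
    fun a => LinearMap.range_comp _ _
  constructor
  · intro i
    simp only [AddMonoidAlgebra.grade_eq_lsingle_range]
    have h := Finsupp.disjoint_lsingle_lsingle (R := K) (M := K) ({i} : Set D) ({i}ᶜ : Set D)
      disjoint_compl_right
    simp only [hl, ← Submodule.map_iSup]
    refine Submodule.disjoint_map
      (AddMonoidAlgebra.coeffLinearEquiv K (S := K) (M := D)).symm.injective ?_
    simpa [iSup_iSup_eq_left, Set.mem_compl_iff, Set.mem_singleton_iff] using h
  · simp only [AddMonoidAlgebra.grade_eq_lsingle_range, hl, ← Submodule.map_iSup,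
      Finsupp.iSup_lsingle_range, Submodule.map_top, LinearEquiv.range]

theorem aux_coloured_assoc_of_cocycle
    {A B : Type*} [NonUnitalRing A] [NonUnitalRing B]
    [Module K A] [Module K B] [IsScalarTower K A A] [SMulCommClass K A A]
    [IsScalarTower K B B] [SMulCommClass K B B]
    (χ : D → D → K)
    (hχ : ∀ α₂ α₃ β₁ β₂ : D, χ β₁ α₂ * χ (β₁ + β₂) α₃ = χ β₂ α₃ * χ β₁ (α₂ + α₃))
    (gA : D → Submodule K A) (gB : D → Submodule K B)
    (hgA : ∀ {α β : D} {a a' : A}, a ∈ gA α → a' ∈ gA β → a * a' ∈ gA (α + β))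
    (hgB : ∀ {α β : D} {b b' : B}, b ∈ gB α → b' ∈ gB β → b * b' ∈ gB (α + β))
    (hiA : ⨆ α, gA α = ⊤) (hiB : ⨆ α, gB α = ⊤)
    (mul : A ⊗[K] B →ₗ[K] A ⊗[K] B →ₗ[K] A ⊗[K] B)
    (hmul : ∀ (α₁ β₁ α₂ β₂ : D) (x₁ x₂ : A) (y₁ y₂ : B),
        x₁ ∈ gA α₁ → y₁ ∈ gB β₁ → x₂ ∈ gA α₂ → y₂ ∈ gB β₂ →
        mul (x₁ ⊗ₜ[K] y₁) (x₂ ⊗ₜ[K] y₂) = χ β₁ α₂ • ((x₁ * x₂) ⊗ₜ[K] (y₁ * y₂)))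
    (t u v : A ⊗[K] B) : mul (mul t u) v = mul t (mul u v) := by
  set s : Set (A ⊗[K] B) :=
    {z | ∃ α β, ∃ x : A, ∃ y : B, x ∈ gA α ∧ y ∈ gB β ∧ z = x ⊗ₜ[K] y} with hs
  have hspan : Submodule.span K s = ⊤ := by
    rw [eq_top_iff, ← TensorProduct.span_tmul_eq_top K A B, Submodule.span_le]
    rintro _ ⟨x, y, rfl⟩
    have hx : x ∈ ⨆ α, gA α := hiA ▸ Submodule.mem_top
    refine Submodule.iSup_induction (motive := fun x => x ⊗ₜ[K] y ∈ Submodule.span K s)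
      gA hx ?_ ?_ ?_
    · intro α x hxα
      have hy : y ∈ ⨆ β, gB β := hiB ▸ Submodule.mem_top
      refine Submodule.iSup_induction (motive := fun y => x ⊗ₜ[K] y ∈ Submodule.span K s)
        gB hy ?_ ?_ ?_
      · intro β y hyβ
        exact Submodule.subset_span ⟨α, β, x, y, hxα, hyβ, rfl⟩
      · simp only [tmul_zero]; exact Submodule.zero_mem _
      · intro y₁ y₂ h1 h2; simp only [tmul_add]; exact Submodule.add_mem _ h1 h2
    · simp only [zero_tmul]; exact Submodule.zero_mem _
    · intro x₁ x₂ h1 h2; simp only [add_tmul]; exact Submodule.add_mem _ h1 h2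
  have key : ∀ t ∈ Submodule.span K s, ∀ u ∈ Submodule.span K s, ∀ v ∈ Submodule.span K s,
      mul (mul t u) v = mul t (mul u v) := by
    intro t ht
    induction ht using Submodule.span_induction with
    | mem t htm =>
      intro u hu
      induction hu using Submodule.span_induction with
      | mem u hum =>
        intro v hv
        induction hv using Submodule.span_induction with
        | mem v hvm =>
          obtain ⟨α₁, β₁, x₁, y₁, hx₁, hy₁, rfl⟩ := htm
          obtain ⟨α₂, β₂, x₂, y₂, hx₂, hy₂, rfl⟩ := hum
          obtain ⟨α₃, β₃, x₃, y₃, hx₃, hy₃, rfl⟩ := hvm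
          rw [hmul α₁ β₁ α₂ β₂ x₁ x₂ y₁ y₂ hx₁ hy₁ hx₂ hy₂,
            hmul α₂ β₂ α₃ β₃ x₂ x₃ y₂ y₃ hx₂ hy₂ hx₃ hy₃,
            map_smul, LinearMap.smul_apply, map_smul,
            hmul (α₁ + α₂) (β₁ + β₂) α₃ β₃ _ x₃ _ y₃ (hgA hx₁ hx₂) (hgB hy₁ hy₂) hx₃ hy₃,
            hmul α₁ β₁ (α₂ + α₃) (β₂ + β₃) x₁ _ y₁ _ hx₁ hy₁ (hgA hx₂ hx₃) (hgB hy₂ hy₃),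
            smul_smul, smul_smul, hχ, mul_assoc x₁ x₂ x₃, mul_assoc y₁ y₂ y₃]
        | zero => simp
        | add v₁ v₂ hv₁ hv₂ ih1 ih2 => simp only [map_add, ih1, ih2]
        | smul a v hv ih => simp only [map_smul, ih]
      | zero => intro v hv; simp
      | add u₁ u₂ hu₁ hu₂ ih1 ih2 =>
        intro v hv
        simp only [map_add, LinearMap.add_apply, ih1 v hv, ih2 v hv]
      | smul a u hu ih =>
        intro v hv
        simp only [map_smul, LinearMap.smul_apply, ih v hv]
    | zero => intro u hu v hv; simp
    | add t₁ t₂ ht₁ ht₂ ih1 ih2 =>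
      intro u hu v hv
      simp only [map_add, LinearMap.add_apply, ih1 u hu v hv, ih2 u hu v hv]
    | smul a t ht ih =>
      intro u hu v hv
      simp only [map_smul, LinearMap.smul_apply, ih u hu v hv]
  exact key t (hspan ▸ Submodule.mem_top) u (hspan ▸ Submodule.mem_top)
    v (hspan ▸ Submodule.mem_top)

end Aux

/-- `χ : D × D → K` satisfies the colour-factor (cocycle) condition iff for all
`D`-graded associative `K`-algebras `A`, `B`, the coloured product on `A ⊗ B`, given on
homogeneous tensors by `(x₁⊗y₁)(x₂⊗y₂) = χ(deg y₁, deg x₂)·(x₁x₂ ⊗ y₁y₂)`, is associative. -/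
theorem colour_factor_iff_coloured_product_assoc
    {K D : Type*} [CommRing K] [AddCommSemigroup D] [DecidableEq D] (χ : D → D → K) :
    (∀ α₂ α₃ β₁ β₂ : D, χ β₁ α₂ * χ (β₁ + β₂) α₃ = χ β₂ α₃ * χ β₁ (α₂ + α₃)) ↔
    (∀ (A B : Type (max u_1 u_2)), ∀ (_ : NonUnitalRing A) (_ : NonUnitalRing B)
        (_ : Module K A) (_ : Module K B)
        (_ : IsScalarTower K A A) (_ : SMulCommClass K A A)
        (_ : IsScalarTower K B B) (_ : SMulCommClass K B B)
        (gA : D → Submodule K A) (gB : D → Submodule K B),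
        (∀ {α β : D} {a a' : A}, a ∈ gA α → a' ∈ gA β → a * a' ∈ gA (α + β)) →
        (∀ {α β : D} {b b' : B}, b ∈ gB α → b' ∈ gB β → b * b' ∈ gB (α + β)) →
        DirectSum.IsInternal gA → DirectSum.IsInternal gB →
        ∀ mul : A ⊗[K] B →ₗ[K] A ⊗[K] B →ₗ[K] A ⊗[K] B,
          (∀ (α₁ β₁ α₂ β₂ : D) (x₁ x₂ : A) (y₁ y₂ : B),
            x₁ ∈ gA α₁ → y₁ ∈ gB β₁ → x₂ ∈ gA α₂ → y₂ ∈ gB β₂ →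
            mul (x₁ ⊗ₜ[K] y₁) (x₂ ⊗ₜ[K] y₂) = χ β₁ α₂ • ((x₁ * x₂) ⊗ₜ[K] (y₁ * y₂))) →
          ∀ t u v : A ⊗[K] B, mul (mul t u) v = mul t (mul u v)) := by
  constructor
  · intro hχ A B iA iB mA mB st1 sc1 st2 sc2 gA gB hgA hgB hiA hiB mul hmul t u v
    exact aux_coloured_assoc_of_cocycle χ hχ gA gB hgA hgB
      hiA.submodule_iSup_eq_top hiB.submodule_iSup_eq_top mul hmul t u v
  · intro H α₂ α₃ β₁ β₂
    classical
    let b : Module.Basis D K (AddMonoidAlgebra K D) := AddMonoidAlgebra.basis D K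
    let bT : Module.Basis (D × D) K (AddMonoidAlgebra K D ⊗[K] AddMonoidAlgebra K D) :=
      b.tensorProduct b
    let mul : AddMonoidAlgebra K D ⊗[K] AddMonoidAlgebra K D →ₗ[K]
        AddMonoidAlgebra K D ⊗[K] AddMonoidAlgebra K D →ₗ[K]
        AddMonoidAlgebra K D ⊗[K] AddMonoidAlgebra K D :=
      bT.constr K fun p => bT.constr K fun q => χ p.2 q.1 • bT (p.1 + q.1, p.2 + q.2)
    have hmulb : ∀ p q, mul (bT p) (bT q) = χ p.2 q.1 • bT (p.1 + q.1, p.2 + q.2) := by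
      intro p q
      simp only [mul, Module.Basis.constr_basis]
    have hb : ∀ (α : D) (c : K),
        (AddMonoidAlgebra.single α c : AddMonoidAlgebra K D) = c • b α := by
      intro α c
      rw [show (b α : AddMonoidAlgebra K D) = AddMonoidAlgebra.single α 1 from rfl]
      rw [show (c • AddMonoidAlgebra.single α (1 : K) : AddMonoidAlgebra K D)
          = AddMonoidAlgebra.single α (c * 1) from AddMonoidAlgebra.smul_single' c α 1, mul_one]
    have hbt : ∀ (α β : D), (b α ⊗ₜ[K] b β :
        AddMonoidAlgebra K D ⊗[K] AddMonoidAlgebra K D) = bT (α, β) := fun α β =>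
      (Module.Basis.tensorProduct_apply b b α β).symm
    have hmul : ∀ (α₁ β₁ α₂ β₂ : D) (x₁ x₂ : AddMonoidAlgebra K D)
        (y₁ y₂ : AddMonoidAlgebra K D),
        x₁ ∈ AddMonoidAlgebra.grade K α₁ → y₁ ∈ AddMonoidAlgebra.grade K β₁ →
        x₂ ∈ AddMonoidAlgebra.grade K α₂ → y₂ ∈ AddMonoidAlgebra.grade K β₂ →
        mul (x₁ ⊗ₜ[K] y₁) (x₂ ⊗ₜ[K] y₂) = χ β₁ α₂ • ((x₁ * x₂) ⊗ₜ[K] (y₁ * y₂)) := by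
      intro a₁ b₁ a₂ b₂ x₁ x₂ y₁ y₂ hx₁ hy₁ hx₂ hy₂
      obtain ⟨c₁, hc₁⟩ := (AddMonoidAlgebra.mem_grade_iff' K a₁ x₁).mp hx₁
      obtain ⟨d₁, hd₁⟩ := (AddMonoidAlgebra.mem_grade_iff' K b₁ y₁).mp hy₁
      obtain ⟨c₂, hc₂⟩ := (AddMonoidAlgebra.mem_grade_iff' K a₂ x₂).mp hx₂
      obtain ⟨d₂, hd₂⟩ := (AddMonoidAlgebra.mem_grade_iff' K b₂ y₂).mp hy₂
      rw [show x₁ = AddMonoidAlgebra.single a₁ c₁ from hc₁.symm,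
        show y₁ = AddMonoidAlgebra.single b₁ d₁ from hd₁.symm,
        show x₂ = AddMonoidAlgebra.single a₂ c₂ from hc₂.symm,
        show y₂ = AddMonoidAlgebra.single b₂ d₂ from hd₂.symm,
        show (AddMonoidAlgebra.single a₁ c₁ * AddMonoidAlgebra.single a₂ c₂ :
            AddMonoidAlgebra K D) = AddMonoidAlgebra.single (a₁ + a₂) (c₁ * c₂) from
          AddMonoidAlgebra.single_mul_single _ _ _ _,
        show (AddMonoidAlgebra.single b₁ d₁ * AddMonoidAlgebra.single b₂ d₂ :
            AddMonoidAlgebra K D) = AddMonoidAlgebra.single (b₁ + b₂) (d₁ * d₂) from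
          AddMonoidAlgebra.single_mul_single _ _ _ _,
        hb, hb, hb, hb, hb, hb]
      have pull : ∀ (c d : K) (u v : AddMonoidAlgebra K D),
          (c • u) ⊗ₜ[K] (d • v) = (c * d) • (u ⊗ₜ[K] v) := by
        intro c d u v
        rw [← smul_tmul', tmul_smul, smul_smul]
      rw [pull, pull, pull, hbt, hbt, hbt]
      simp only [map_smul, LinearMap.smul_apply, hmulb]
      module
    have h := H (AddMonoidAlgebra K D) (AddMonoidAlgebra K D)
      inferInstance inferInstance inferInstance inferInstance
      inferInstance inferInstance inferInstance inferInstance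
      (fun α => AddMonoidAlgebra.grade K α) (fun α => AddMonoidAlgebra.grade K α)
      (fun h1 h2 => aux_grade_mul_mem h1 h2) (fun h1 h2 => aux_grade_mul_mem h1 h2)
      aux_grade_isInternal aux_grade_isInternal mul hmul
      (bT (α₂, β₁)) (bT (α₂, β₂)) (bT (α₃, β₂))
    rw [hmulb (α₂, β₁) (α₂, β₂), hmulb (α₂, β₂) (α₃, β₂), map_smul, LinearMap.smul_apply,
      map_smul, hmulb (α₂ + α₂, β₁ + β₂) (α₃, β₂), hmulb (α₂, β₁) (α₂ + α₃, β₂ + β₂),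
      smul_smul, smul_smul] at h
    have h2 := congrArg (fun z => bT.repr z (α₂ + α₂ + α₃, β₁ + β₂ + β₂)) h
    simp only [map_smul, Finsupp.smul_apply, Module.Basis.repr_self, smul_eq_mul] at h2
    rw [show α₂ + (α₂ + α₃) = α₂ + α₂ + α₃ from (add_assoc _ _ _).symm,
      show β₁ + (β₂ + β₂) = β₁ + β₂ + β₂ from (add_assoc _ _ _).symm] at h2
    simpa [Finsupp.single_eq_same] using h2
end

section
/- Shifting lemma: Let A be an algebra with product ⋆, decomposed as a direct sum of subspaces A = ⊕_{α∈D} A_α over a semigroup D, and let α ↦ T_α be a morphism of semigroups from D into algebra endomorphisms of A such that T_α(A_β) ⊆ A_{α+β} and T_α ∘ T_β = T_{α+β}. Define the shifted law by x ⋆̄ y = x ⋆ T_α(y) for x ∈ A_α, extended bilinearly, and assume ⋆̄ is graded (x ∈ A_α, y ∈ A_β implies x ⋆̄ y ∈ A_{α+β}). Then if ⋆ is associative, so is ⋆̄. -/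
/-- shifting lemma: let `A = ⊕_{α∈D} A_α` be an algebra decomposed as a
direct sum of subspaces over a semigroup `D`, `T : D → End(A)` a semigroup morphism of
multiplicative endomorphisms shifting degrees, and `⋆̄` the shifted law
`x ⋆̄ y = x ⋆ T_α(y)` for `x ∈ A_α`, assumed graded.  If `⋆` is associative so is `⋆̄`. -/
theorem shifting_lemma
    {K D A : Type*} [CommRing K] [AddSemigroup D] [DecidableEq D]
    [AddCommGroup A] [Module K A]
    (star : A →ₗ[K] A →ₗ[K] A)
    (g : D → Submodule K A) (hinternal : DirectSum.IsInternal g)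
    (T : D → (A →ₗ[K] A))
    (hTmul : ∀ (α : D) (x y : A), T α (star x y) = star (T α x) (T α y))
    (hTdeg : ∀ (α β : D) (x : A), x ∈ g β → T α x ∈ g (α + β))
    (hTadd : ∀ α β : D, (T α).comp (T β) = T (α + β))
    (sbar : A →ₗ[K] A →ₗ[K] A)
    (hsbar : ∀ (α : D) (x : A), x ∈ g α → ∀ y : A, sbar x y = star x (T α y))
    (hgraded : ∀ (α β : D) (x y : A), x ∈ g α → y ∈ g β → sbar x y ∈ g (α + β))
    (hassoc : ∀ x y z : A, star (star x y) z = star x (star y z)) :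
    ∀ x y z : A, sbar (sbar x y) z = sbar x (sbar y z) := by
  have htop : (⨆ i, g i) = ⊤ := hinternal.submodule_iSup_eq_top
  -- key: the statement for homogeneous x and y, arbitrary z
  have key : ∀ (α β : D) (x y : A), x ∈ g α → y ∈ g β → ∀ z : A,
      sbar (sbar x y) z = sbar x (sbar y z) := by
    intro α β x y hx hy z
    have h1 : sbar x y ∈ g (α + β) := hgraded α β x y hx hy
    rw [hsbar (α + β) _ h1 z, hsbar α x hx, hsbar α x hx, hsbar β y hy,
      hTmul α y (T β z), hassoc]
    have : T α (T β z) = T (α + β) z := by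
      have := hTadd α β
      exact congrArg (fun f => f z) this
    rw [this]
  intro x y z
  -- reduce to homogeneous y first
  have hy : ∀ (α : D) (x : A), x ∈ g α → ∀ y z : A,
      sbar (sbar x y) z = sbar x (sbar y z) := by
    intro α x hx y z
    have hy' : y ∈ ⨆ i, g i := htop ▸ Submodule.mem_top
    refine Submodule.iSup_induction g (motive := fun y => sbar (sbar x y) z = sbar x (sbar y z))
      hy' (fun β b hb => key α β x b hx hb z) (by simp) (fun a b ha hb => by simp [ha, hb])
  have hx' : x ∈ ⨆ i, g i := htop ▸ Submodule.mem_top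
  refine Submodule.iSup_induction g (motive := fun x => sbar (sbar x y) z = sbar x (sbar y z))
    hx' (fun α a ha => hy α a ha y z) (by simp) (fun a b ha hb => by simp [ha, hb])
end

section
/- Let S be a semigroup satisfying condition (D) (every element has only finitely many factorizations z = xy), graded by a degree function |·|_d : S → ℕ (a semigroup morphism to (ℕ,+)), and q_s ∈ K. Then the comultiplication Δ₁ on K[S] defined on basis elements by Δ₁(s) = Σ_{rt=s} q_s^{|r|_d·|t|_d} (r ⊗ t) is coassociative. -/
open Finsupp

variable {S K : Type*} [Semigroup S] [CommRing K]

/-- The deformed coproduct `Δ₁(s) = Σ_{rt=s} q^{|r||t|} r ⊗ t` on `K[S]`, with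
`K[S] ⊗ K[S]` identified with `K[S × S]`.  `hfin` is condition (D): every element
has finitely many factorizations. -/
noncomputable def delta1 (deg : S → ℕ) (q : K)
    (hfin : ∀ z : S, {p : S × S | p.1 * p.2 = z}.Finite) (f : S →₀ K) : S × S →₀ K :=
  f.sum fun s a => (hfin s).toFinset.sum fun p =>
    Finsupp.single p (a * q ^ (deg p.1 * deg p.2))

/-- `Δ₁ ⊗ id`, on `K[S × S]` with values in `K[S × S × S]`. -/
noncomputable def delta1Left (deg : S → ℕ) (q : K)
    (hfin : ∀ z : S, {p : S × S | p.1 * p.2 = z}.Finite) (f : S × S →₀ K) : S × S × S →₀ K :=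
  f.sum fun p a => (hfin p.1).toFinset.sum fun p' =>
    Finsupp.single (p'.1, p'.2, p.2) (a * q ^ (deg p'.1 * deg p'.2))

/-- `id ⊗ Δ₁`, on `K[S × S]` with values in `K[S × S × S]`. -/
noncomputable def delta1Right (deg : S → ℕ) (q : K)
    (hfin : ∀ z : S, {p : S × S | p.1 * p.2 = z}.Finite) (f : S × S →₀ K) : S × S × S →₀ K :=
  f.sum fun p a => (hfin p.2).toFinset.sum fun p' =>
    Finsupp.single (p.1, p'.1, p'.2) (a * q ^ (deg p'.1 * deg p'.2))


lemma delta1_add (deg : S → ℕ) (q : K)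
    (hfin : ∀ z : S, {p : S × S | p.1 * p.2 = z}.Finite) (f g : S →₀ K) :
    delta1 deg q hfin (f + g) = delta1 deg q hfin f + delta1 deg q hfin g := by
  unfold delta1
  rw [Finsupp.sum_add_index'] <;> intros <;>
    simp [add_mul, Finsupp.single_add, Finset.sum_add_distrib]

lemma delta1Left_add (deg : S → ℕ) (q : K)
    (hfin : ∀ z : S, {p : S × S | p.1 * p.2 = z}.Finite) (f g : S × S →₀ K) :
    delta1Left deg q hfin (f + g) = delta1Left deg q hfin f + delta1Left deg q hfin g := by
  unfold delta1Left
  rw [Finsupp.sum_add_index'] <;> intros <;>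
    simp [add_mul, Finsupp.single_add, Finset.sum_add_distrib]

lemma delta1Right_add (deg : S → ℕ) (q : K)
    (hfin : ∀ z : S, {p : S × S | p.1 * p.2 = z}.Finite) (f g : S × S →₀ K) :
    delta1Right deg q hfin (f + g) = delta1Right deg q hfin f + delta1Right deg q hfin g := by
  unfold delta1Right
  rw [Finsupp.sum_add_index'] <;> intros <;>
    simp [add_mul, Finsupp.single_add, Finset.sum_add_distrib]

lemma delta1_single (deg : S → ℕ) (q : K)
    (hfin : ∀ z : S, {p : S × S | p.1 * p.2 = z}.Finite) (s : S) (a : K) :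
    delta1 deg q hfin (Finsupp.single s a) =
      (hfin s).toFinset.sum (fun p => Finsupp.single p (a * q ^ (deg p.1 * deg p.2))) := by
  unfold delta1
  rw [Finsupp.sum_single_index]
  simp

lemma delta1Left_single (deg : S → ℕ) (q : K)
    (hfin : ∀ z : S, {p : S × S | p.1 * p.2 = z}.Finite) (p : S × S) (c : K) :
    delta1Left deg q hfin (Finsupp.single p c) =
      (hfin p.1).toFinset.sum (fun p' =>
        Finsupp.single (p'.1, p'.2, p.2) (c * q ^ (deg p'.1 * deg p'.2))) := by
  unfold delta1Left
  rw [Finsupp.sum_single_index]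
  simp

lemma delta1Right_single (deg : S → ℕ) (q : K)
    (hfin : ∀ z : S, {p : S × S | p.1 * p.2 = z}.Finite) (p : S × S) (c : K) :
    delta1Right deg q hfin (Finsupp.single p c) =
      (hfin p.2).toFinset.sum (fun p' =>
        Finsupp.single (p.1, p'.1, p'.2) (c * q ^ (deg p'.1 * deg p'.2))) := by
  unfold delta1Right
  rw [Finsupp.sum_single_index]
  simp

lemma delta1Left_sum {ι : Type*} (deg : S → ℕ) (q : K)
    (hfin : ∀ z : S, {p : S × S | p.1 * p.2 = z}.Finite) (T : Finset ι)
    (g : ι → (S × S →₀ K)) :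
    delta1Left deg q hfin (∑ i ∈ T, g i) = ∑ i ∈ T, delta1Left deg q hfin (g i) :=
  map_sum (⟨⟨delta1Left deg q hfin, by simp [delta1Left]⟩,
    delta1Left_add deg q hfin⟩ : (S × S →₀ K) →+ (S × S × S →₀ K)) g T

lemma delta1Right_sum {ι : Type*} (deg : S → ℕ) (q : K)
    (hfin : ∀ z : S, {p : S × S | p.1 * p.2 = z}.Finite) (T : Finset ι)
    (g : ι → (S × S →₀ K)) :
    delta1Right deg q hfin (∑ i ∈ T, g i) = ∑ i ∈ T, delta1Right deg q hfin (g i) :=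
  map_sum (⟨⟨delta1Right deg q hfin, by simp [delta1Right]⟩,
    delta1Right_add deg q hfin⟩ : (S × S →₀ K) →+ (S × S × S →₀ K)) g T

/-- if `S` is a semigroup of type (D) graded by a degree function
`deg : S → ℕ`, the comultiplication `Δ₁(s) = Σ_{rt=s} q_s^{|r|·|t|} r ⊗ t` on `K[S]`
is coassociative. -/
theorem delta1_coassoc (deg : S → ℕ) (hdeg : ∀ x y : S, deg (x * y) = deg x + deg y)
    (q : K) (hfin : ∀ z : S, {p : S × S | p.1 * p.2 = z}.Finite) :
    ∀ f : S →₀ K,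
      delta1Left deg q hfin (delta1 deg q hfin f) =
        delta1Right deg q hfin (delta1 deg q hfin f) := by
  intro f
  induction f using Finsupp.induction_linear with
  | zero => simp [delta1, delta1Left, delta1Right]
  | add f g hf hg =>
      rw [delta1_add, delta1Left_add, delta1Right_add, hf, hg]
  | single s a =>
      rw [delta1_single, delta1Left_sum, delta1Right_sum]
      simp only [delta1Left_single, delta1Right_single]
      rw [Finset.sum_sigma', Finset.sum_sigma']
      refine Finset.sum_nbij' (fun x => ⟨(x.2.1, x.2.2 * x.1.2), (x.2.2, x.1.2)⟩)
        (fun x => ⟨(x.1.1 * x.2.1, x.2.2), (x.1.1, x.2.1)⟩) ?_ ?_ ?_ ?_ ?_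
      · rintro ⟨⟨x, y⟩, ⟨u, v⟩⟩ hm
        simp only [Finset.mem_sigma, Set.Finite.mem_toFinset, Set.mem_setOf_eq] at hm ⊢
        obtain ⟨h1, h2⟩ := hm
        exact ⟨by rw [← mul_assoc, h2, h1], trivial⟩
      · rintro ⟨⟨x, y⟩, ⟨v, w⟩⟩ hm
        simp only [Finset.mem_sigma, Set.Finite.mem_toFinset, Set.mem_setOf_eq] at hm ⊢
        obtain ⟨h1, h2⟩ := hm
        exact ⟨by rw [mul_assoc, h2, h1], trivial⟩
      · rintro ⟨⟨x, y⟩, ⟨u, v⟩⟩ hm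
        simp only [Finset.mem_sigma, Set.Finite.mem_toFinset, Set.mem_setOf_eq] at hm
        obtain ⟨h1, h2⟩ := hm
        simp [h2]
      · rintro ⟨⟨x, y⟩, ⟨v, w⟩⟩ hm
        simp only [Finset.mem_sigma, Set.Finite.mem_toFinset, Set.mem_setOf_eq] at hm
        obtain ⟨h1, h2⟩ := hm
        simp [h2]
      · rintro ⟨⟨x, y⟩, ⟨u, v⟩⟩ hm
        simp only [Finset.mem_sigma, Set.Finite.mem_toFinset, Set.mem_setOf_eq] at hm
        obtain ⟨h1, h2⟩ := hm
        subst h2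
        congr 1
        rw [hdeg, hdeg]
        ring
end

section
/- On the free algebra K⟨A⟩ over an alphabet A, for any q ∈ K the comultiplication Δ_q defined as the algebra morphism K⟨A⟩ → K⟨A⟩ ⊗ K⟨A⟩ with Δ_q(x) = x⊗1 + 1⊗x + q·x⊗x for each letter x ∈ A is coassociative. -/
open TensorProduct

/-- The deformation `Δ_q` of the shuffle coproduct on the free algebra `K⟨A⟩`:
the unique algebra morphism `K⟨A⟩ → K⟨A⟩ ⊗ K⟨A⟩` with
`Δ_q(x) = x ⊗ 1 + 1 ⊗ x + q·(x ⊗ x)` on each letter `x ∈ A`. -/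
noncomputable def deltaQ (K A : Type*) [CommRing K] (q : K) :
    FreeAlgebra K A →ₐ[K] FreeAlgebra K A ⊗[K] FreeAlgebra K A :=
  FreeAlgebra.lift K fun x =>
    FreeAlgebra.ι K x ⊗ₜ[K] 1 + 1 ⊗ₜ[K] FreeAlgebra.ι K x +
      q • (FreeAlgebra.ι K x ⊗ₜ[K] FreeAlgebra.ι K x)

/-- for every `q ∈ K`, the comultiplication `Δ_q` is coassociative. -/
theorem deltaQ_coassoc (K A : Type*) [CommRing K] (q : K) :
    ∀ w : FreeAlgebra K A,
      (Algebra.TensorProduct.assoc K K K (FreeAlgebra K A) (FreeAlgebra K A) (FreeAlgebra K A))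
          ((Algebra.TensorProduct.map (deltaQ K A q) (AlgHom.id K (FreeAlgebra K A)))
            (deltaQ K A q w)) =
        (Algebra.TensorProduct.map (AlgHom.id K (FreeAlgebra K A)) (deltaQ K A q))
          (deltaQ K A q w) := by
  intro w
  have h : ((Algebra.TensorProduct.assoc K K K (FreeAlgebra K A) (FreeAlgebra K A)
        (FreeAlgebra K A)).toAlgHom.comp
        ((Algebra.TensorProduct.map (deltaQ K A q) (AlgHom.id K (FreeAlgebra K A))).comp
          (deltaQ K A q))) =
      ((Algebra.TensorProduct.map (AlgHom.id K (FreeAlgebra K A)) (deltaQ K A q)).comp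
        (deltaQ K A q)) := by
    apply FreeAlgebra.hom_ext
    ext x
    set_option maxRecDepth 4000 in
    simp only [AlgEquiv.toAlgHom_eq_coe, deltaQ, AlgHom.coe_comp, AlgHom.coe_coe,
      Function.comp_apply, FreeAlgebra.lift_ι_apply, map_add, Algebra.TensorProduct.map_tmul,
      AlgHom.coe_id, id_eq, Algebra.TensorProduct.one_def, add_tmul, tmul_add, map_one, map_smul,
      smul_add, ← smul_tmul', tmul_smul, AlgEquiv.coe_algHom, Algebra.TensorProduct.assoc_tmul]
    module
  exact DFunLike.congr_fun h w
end

section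
/- Let S be a semigroup graded by a degree function |·|_d : S → ℕ, and q_c, q_s two elements of a commutative ring K. On K⟨S⟩ = K[S*] (span of words with letters in S) define a bilinear product ↑ recursively by w ↑ 1 = 1 ↑ w = w and (au) ↑ (bv) = a(u ↑ bv) + q_c^{|au|_d|b|_d} b(au ↑ v) + q_c^{|u|_d|b|_d} q_s^{|a|_d|b|_d} (a·b)(u ↑ v), where a,b ∈ S, u,v ∈ S*, a·b is the product in S, and |a₁...a_k|_d = Σ|a_i|_d. Then ↑ is associative with unit the empty word, and is graded for |·|_d. -/
open Finsupp

variable {S K : Type*}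

/-- Degree of a word over the graded semigroup `S`: the sum of the degrees of its letters. -/
def degw (deg : S → ℕ) (w : List S) : ℕ := (w.map deg).sum

/-- The deformed product `↑` of Proposition 5.1, defined recursively on words over `S`
(with values in `K⟨S⟩`):
`1 ↑ w = w ↑ 1 = w` and
`au ↑ bv = a(u ↑ bv) + q_c^{|au||b|} b(au ↑ v) + q_c^{|u||b|} q_s^{|a||b|} (a·b)(u ↑ v)`. -/
noncomputable def upArrow [Semigroup S] [CommRing K] (deg : S → ℕ) (qc qs : K) :
    List S → List S → (List S →₀ K)
  | [], w => Finsupp.single w 1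
  | a :: u, [] => Finsupp.single (a :: u) 1
  | a :: u, b :: v =>
      Finsupp.mapDomain (a :: ·) (upArrow deg qc qs u (b :: v)) +
        qc ^ (degw deg (a :: u) * deg b) •
          Finsupp.mapDomain (b :: ·) (upArrow deg qc qs (a :: u) v) +
        (qc ^ (degw deg u * deg b) * qs ^ (deg a * deg b)) •
          Finsupp.mapDomain ((a * b) :: ·) (upArrow deg qc qs u v)
  termination_by w₁ w₂ => w₁.length + w₂.length
  decreasing_by all_goals (simp; try omega)

/-- Bilinear extension of `↑` to `K⟨S⟩ = K[S*]`. -/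
noncomputable def upArrowMul [Semigroup S] [CommRing K] (deg : S → ℕ) (qc qs : K)
    (f g : List S →₀ K) : List S →₀ K :=
  f.sum fun w a => g.sum fun w' b => (a * b) • upArrow deg qc qs w w'

section helper
set_option linter.unusedSectionVars false
variable [Semigroup S] [CommRing K] (deg : S → ℕ) (qc qs : K)

lemma upArrow_nil (w : List S) : upArrow (K := K) deg qc qs [] w = Finsupp.single w 1 := by
  rw [upArrow]

lemma upArrow_cons_nil (a : S) (u : List S) :
    upArrow (K := K) deg qc qs (a :: u) [] = Finsupp.single (a :: u) 1 := by
  rw [upArrow]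

lemma upArrow_cons_cons (a b : S) (u v : List S) :
    upArrow (K := K) deg qc qs (a :: u) (b :: v) =
      Finsupp.mapDomain (a :: ·) (upArrow deg qc qs u (b :: v)) +
        qc ^ (degw deg (a :: u) * deg b) •
          Finsupp.mapDomain (b :: ·) (upArrow deg qc qs (a :: u) v) +
        (qc ^ (degw deg u * deg b) * qs ^ (deg a * deg b)) •
          Finsupp.mapDomain ((a * b) :: ·) (upArrow deg qc qs u v) := by
  rw [upArrow]
/-- Left multiplication by a letter, as a linear map. -/
noncomputable def lmul (a : S) : (List S →₀ K) →ₗ[K] (List S →₀ K) :=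
  Finsupp.lmapDomain K K (a :: ·)

@[simp] lemma lmul_apply (a : S) (f : List S →₀ K) :
    lmul a f = Finsupp.mapDomain (a :: ·) f := rfl

@[simp] lemma lmul_single (a : S) (w : List S) (c : K) :
    lmul a (Finsupp.single w c) = Finsupp.single (a :: w) c := by
  simp [lmul, Finsupp.mapDomain_single]

noncomputable def B1 (w : List S) : (List S →₀ K) →ₗ[K] (List S →₀ K) :=
  Finsupp.lsum K fun w' => LinearMap.toSpanSingleton K _ (upArrow deg qc qs w w')

noncomputable def Bmap : (List S →₀ K) →ₗ[K] (List S →₀ K) →ₗ[K] (List S →₀ K) :=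
  Finsupp.lsum K fun w => LinearMap.toSpanSingleton K _ (B1 deg qc qs w)

lemma B1_single (w w' : List S) (b : K) :
    B1 deg qc qs w (Finsupp.single w' b) = b • upArrow deg qc qs w w' := by
  simp [B1]

lemma Bmap_single (w : List S) (a : K) :
    Bmap deg qc qs (Finsupp.single w a) = a • B1 deg qc qs w := by
  simp [Bmap]

lemma Bmap_single_single (w w' : List S) (a b : K) :
    Bmap deg qc qs (Finsupp.single w a) (Finsupp.single w' b) =
      (a * b) • upArrow deg qc qs w w' := by
  simp [Bmap_single, B1_single, mul_smul]

lemma upArrowMul_eq (f g : List S →₀ K) :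
    upArrowMul deg qc qs f g = Bmap deg qc qs f g := by
  rw [upArrowMul, Bmap, Finsupp.lsum_apply, LinearMap.finsupp_sum_apply]
  refine Finsupp.sum_congr fun w _ => ?_
  rw [LinearMap.toSpanSingleton_apply, LinearMap.smul_apply, B1, Finsupp.lsum_apply,
    Finsupp.smul_sum]
  refine Finsupp.sum_congr fun w' _ => ?_
  simp [mul_smul]

lemma Bmap_single_right (f : List S →₀ K) (w' : List S) :
    Bmap deg qc qs f (Finsupp.single w' 1) = f.sum fun w a => a • upArrow deg qc qs w w' := by
  rw [Bmap, Finsupp.lsum_apply, LinearMap.finsupp_sum_apply]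
  refine Finsupp.sum_congr fun w _ => ?_
  simp [B1_single]

lemma Bmap_single_left (s : List S) (g : List S →₀ K) :
    Bmap deg qc qs (Finsupp.single s 1) g = g.sum fun w' b => b • upArrow deg qc qs s w' := by
  rw [Bmap_single, one_smul, B1, Finsupp.lsum_apply]
  exact Finsupp.sum_congr fun w' _ => by simp

lemma Bmap_lmul_single (x : S) (F : List S →₀ K) (t' : List S) :
    Bmap deg qc qs (lmul x F) (Finsupp.single t' 1) =
      F.sum fun w a => a • upArrow deg qc qs (x :: w) t' := by
  rw [Bmap_single_right, lmul_apply, Finsupp.sum_mapDomain_index] <;> simp [add_smul]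

lemma Bmap_single_lmul (s : List S) (y : S) (G : List S →₀ K) :
    Bmap deg qc qs (Finsupp.single s 1) (lmul y G) =
      G.sum fun w a => a • upArrow deg qc qs s (y :: w) := by
  rw [Bmap_single_left, lmul_apply, Finsupp.sum_mapDomain_index] <;> simp [add_smul]

@[simp] lemma degw_nil : degw deg ([] : List S) = 0 := rfl
@[simp] lemma degw_cons (a : S) (u : List S) : degw deg (a :: u) = deg a + degw deg u := rfl

lemma graded_aux (hdeg : ∀ x y : S, deg (x * y) = deg x + deg y) :
    ∀ n (w₁ w₂ : List S), w₁.length + w₂.length ≤ n →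
      ∀ w ∈ (upArrow (K := K) deg qc qs w₁ w₂).support,
        degw deg w = degw deg w₁ + degw deg w₂ := by
  intro n
  induction n with
  | zero =>
    intro w₁ w₂ h w hw
    obtain ⟨rfl, rfl⟩ : w₁ = [] ∧ w₂ = [] := by
      constructor <;> [skip; skip] <;>
        · cases w₁ <;> cases w₂ <;> simp_all
    rw [upArrow_nil] at hw
    have := Finsupp.support_single_subset hw
    simp_all
  | succ n ih =>
    intro w₁ w₂ hlen w hw
    classical
    match w₁, w₂ with
    | [], w₂ =>
      rw [upArrow_nil] at hw
      have := Finsupp.support_single_subset hw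
      simp_all
    | a :: u, [] =>
      rw [upArrow_cons_nil] at hw
      have := Finsupp.support_single_subset hw
      simp_all
    | a :: u, b :: v =>
      rw [upArrow_cons_cons] at hw
      have h1 : u.length + (b :: v).length ≤ n := by simp at hlen ⊢; omega
      have h2 : (a :: u).length + v.length ≤ n := by simp at hlen ⊢; omega
      have h3 : u.length + v.length ≤ n := by simp at hlen ⊢; omega
      have hw' := Finsupp.support_add hw
      rw [Finset.mem_union] at hw'
      rcases hw' with hw' | hw'
      · have hw'' := Finsupp.support_add hw'
        rw [Finset.mem_union] at hw''
        rcases hw'' with hw'' | hw''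
        · obtain ⟨w', hmem, rfl⟩ := Finset.mem_image.mp (Finsupp.mapDomain_support hw'')
          have := ih u (b :: v) h1 w' hmem
          simp_all; omega
        · have hw3 := Finsupp.support_smul hw''
          obtain ⟨w', hmem, rfl⟩ := Finset.mem_image.mp (Finsupp.mapDomain_support hw3)
          have := ih (a :: u) v h2 w' hmem
          simp_all; omega
      · have hw3 := Finsupp.support_smul hw'
        obtain ⟨w', hmem, rfl⟩ := Finset.mem_image.mp (Finsupp.mapDomain_support hw3)
        have := ih u v h3 w' hmem
        simp_all [hdeg]; omega

lemma upArrow_graded (hdeg : ∀ x y : S, deg (x * y) = deg x + deg y) (w₁ w₂ : List S) :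
    ∀ w ∈ (upArrow (K := K) deg qc qs w₁ w₂).support,
      degw deg w = degw deg w₁ + degw deg w₂ :=
  graded_aux deg qc qs hdeg (w₁.length + w₂.length) w₁ w₂ le_rfl

lemma upArrow_nil_right (w : List S) :
    upArrow (K := K) deg qc qs w [] = Finsupp.single w 1 := by
  cases w <;> simp [upArrow_nil, upArrow_cons_nil]

lemma Bmap_one_left (g : List S →₀ K) :
    Bmap deg qc qs (Finsupp.single [] 1) g = g := by
  rw [Bmap_single_left]
  simp [upArrow_nil, Finsupp.smul_single, Finsupp.sum_single]

lemma Bmap_one_right (f : List S →₀ K) :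
    Bmap deg qc qs f (Finsupp.single [] 1) = f := by
  rw [Bmap_single_right]
  simp [upArrow_nil_right, Finsupp.smul_single, Finsupp.sum_single]

lemma Lcons (x : S) (F : List S →₀ K) (m : ℕ)
    (hF : ∀ w ∈ F.support, degw deg w = m) (c : S) (t : List S) :
    Bmap deg qc qs (lmul x F) (Finsupp.single (c :: t) 1) =
      lmul x (Bmap deg qc qs F (Finsupp.single (c :: t) 1)) +
        qc ^ ((deg x + m) * deg c) •
          lmul c (Bmap deg qc qs (lmul x F) (Finsupp.single t 1)) +
        (qc ^ (m * deg c) * qs ^ (deg x * deg c)) •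
          lmul (x * c) (Bmap deg qc qs F (Finsupp.single t 1)) := by
  rw [Bmap_lmul_single, Bmap_single_right, Bmap_lmul_single, Bmap_single_right,
    map_finsuppSum, map_finsuppSum, map_finsuppSum, Finsupp.smul_sum, Finsupp.smul_sum,
    ← Finsupp.sum_add, ← Finsupp.sum_add]
  refine Finsupp.sum_congr fun w hw => ?_
  rw [upArrow_cons_cons]
  have hm := hF w hw
  simp only [map_smul, degw_cons, hm, lmul_apply]
  module

lemma Rcons (a : S) (u : List S) (y : S) (G : List S →₀ K) :
    Bmap deg qc qs (Finsupp.single (a :: u) 1) (lmul y G) =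
      lmul a (Bmap deg qc qs (Finsupp.single u 1) (lmul y G)) +
        qc ^ ((deg a + degw deg u) * deg y) •
          lmul y (Bmap deg qc qs (Finsupp.single (a :: u) 1) G) +
        (qc ^ (degw deg u * deg y) * qs ^ (deg a * deg y)) •
          lmul (a * y) (Bmap deg qc qs (Finsupp.single u 1) G) := by
  rw [Bmap_single_lmul, Bmap_single_lmul, Bmap_single_left, Bmap_single_left,
    map_finsuppSum, map_finsuppSum, map_finsuppSum, Finsupp.smul_sum, Finsupp.smul_sum,
    ← Finsupp.sum_add, ← Finsupp.sum_add]
  refine Finsupp.sum_congr fun w hw => ?_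
  rw [upArrow_cons_cons]
  simp only [map_smul, degw_cons, lmul_apply]
  module

lemma upArrow_cons_cons' (a b : S) (u v : List S) :
    upArrow (K := K) deg qc qs (a :: u) (b :: v) =
      lmul a (upArrow deg qc qs u (b :: v)) +
        qc ^ ((deg a + degw deg u) * deg b) • lmul b (upArrow deg qc qs (a :: u) v) +
        (qc ^ (degw deg u * deg b) * qs ^ (deg a * deg b)) •
          lmul (a * b) (upArrow deg qc qs u v) := by
  rw [upArrow_cons_cons]; simp [lmul_apply, degw_cons]

lemma assoc_aux (hdeg : ∀ x y : S, deg (x * y) = deg x + deg y) :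
    ∀ n (w₁ w₂ w₃ : List S), w₁.length + w₂.length + w₃.length ≤ n →
      Bmap deg qc qs (upArrow deg qc qs w₁ w₂) (Finsupp.single w₃ 1) =
        Bmap deg qc qs (Finsupp.single w₁ 1) (upArrow deg qc qs w₂ w₃) := by
  intro n
  induction n with
  | zero =>
    intro w₁ w₂ w₃ h
    obtain ⟨rfl, rfl, rfl⟩ : w₁ = [] ∧ w₂ = [] ∧ w₃ = [] := by
      refine ⟨?_, ?_, ?_⟩ <;> cases w₁ <;> cases w₂ <;> cases w₃ <;> simp_all
    rw [upArrow_nil, Bmap_one_left]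
  | succ n ih =>
    intro w₁ w₂ w₃ hlen
    match w₁, w₂, w₃ with
    | [], w₂, w₃ =>
      rw [upArrow_nil, Bmap_one_left, Bmap_single_single]
      simp
    | a :: u, [], w₃ =>
      rw [upArrow_cons_nil, upArrow_nil]
    | a :: u, b :: v, [] =>
      rw [upArrow_nil_right, Bmap_one_right, Bmap_single_single]
      simp
    | a :: u, b :: v, c :: t =>
      have hl : (a :: u).length + (b :: v).length + (c :: t).length ≤ n + 1 := hlen
      simp only [List.length_cons] at hl
      have hP : ∀ w ∈ (upArrow (K := K) deg qc qs u (b :: v)).support,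
          degw deg w = degw deg u + (deg b + degw deg v) := fun w hw => by
        simpa using upArrow_graded deg qc qs hdeg u (b :: v) w hw
      have hQ : ∀ w ∈ (upArrow (K := K) deg qc qs (a :: u) v).support,
          degw deg w = deg a + degw deg u + degw deg v := fun w hw => by
        simpa using upArrow_graded deg qc qs hdeg (a :: u) v w hw
      have hR : ∀ w ∈ (upArrow (K := K) deg qc qs u v).support,
          degw deg w = degw deg u + degw deg v := fun w hw => by
        simpa using upArrow_graded deg qc qs hdeg u v w hw
      have I1 := ih u (b :: v) (c :: t) (by simp only [List.length_cons]; omega)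
      have I2 := ih (a :: u) (b :: v) t (by simp only [List.length_cons]; omega)
      have I3 := ih (a :: u) v (c :: t) (by simp only [List.length_cons]; omega)
      have I4 := ih u v (c :: t) (by simp only [List.length_cons]; omega)
      have I5 := ih u (b :: v) t (by simp only [List.length_cons]; omega)
      have I6 := ih (a :: u) v t (by simp only [List.length_cons]; omega)
      have I7 := ih u v t (by omega)
      -- expand left-hand side
      rw [upArrow_cons_cons' deg qc qs a b u v]
      simp only [map_add, map_smul, LinearMap.add_apply, LinearMap.smul_apply]
      rw [Lcons deg qc qs a _ (degw deg u + (deg b + degw deg v)) hP c t,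
        Lcons deg qc qs b _ (deg a + degw deg u + degw deg v) hQ c t,
        Lcons deg qc qs (a * b) _ (degw deg u + degw deg v) hR c t]
      rw [I1, I3, I4, I5, I6, I7]
      -- expand right-hand side (and the occurrences introduced by I1, I4)
      rw [upArrow_cons_cons' deg qc qs b c v t]
      simp only [map_add, map_smul, LinearMap.add_apply, LinearMap.smul_apply]
      rw [Rcons deg qc qs a u b, Rcons deg qc qs a u c, Rcons deg qc qs a u (b * c)]
      rw [← I2, upArrow_cons_cons' deg qc qs a b u v]
      simp only [map_add, map_smul, LinearMap.add_apply, LinearMap.smul_apply]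
      rw [mul_assoc]
      simp only [hdeg, add_mul, mul_add, pow_add]
      module

lemma Bmap_assoc (hdeg : ∀ x y : S, deg (x * y) = deg x + deg y) (f g h : List S →₀ K) :
    Bmap deg qc qs (Bmap deg qc qs f g) h = Bmap deg qc qs f (Bmap deg qc qs g h) := by
  induction f using Finsupp.induction_linear with
  | zero => simp
  | add f1 f2 e1 e2 => simp only [map_add, LinearMap.add_apply, e1, e2]
  | single w1 aa =>
    induction g using Finsupp.induction_linear with
    | zero => simp
    | add g1 g2 e1 e2 => simp only [map_add, LinearMap.add_apply, e1, e2]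
    | single w2 bb =>
      induction h using Finsupp.induction_linear with
      | zero => simp
      | add h1 h2 e1 e2 => simp only [map_add, e1, e2]
      | single w3 cc =>
        have e3 : (Finsupp.single w3 cc : List S →₀ K) = cc • Finsupp.single w3 1 := by
          simp [Finsupp.smul_single]
        have e1 : (Finsupp.single w1 aa : List S →₀ K) = aa • Finsupp.single w1 1 := by
          simp [Finsupp.smul_single]
        rw [Bmap_single_single, Bmap_single_single, e3, e1]
        simp only [map_smul, LinearMap.smul_apply]
        rw [assoc_aux deg qc qs hdeg (w1.length + w2.length + w3.length) w1 w2 w3 le_rfl]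
        module


end helper

/-- the product `↑` on `K⟨S⟩` is associative, has the empty word as unit,
and is graded for the degree. -/
theorem upArrow_assoc_unital_graded [Semigroup S] [CommRing K]
    (deg : S → ℕ) (hdeg : ∀ x y : S, deg (x * y) = deg x + deg y) (qc qs : K) :
    (∀ f g h : List S →₀ K,
      upArrowMul deg qc qs (upArrowMul deg qc qs f g) h =
        upArrowMul deg qc qs f (upArrowMul deg qc qs g h)) ∧
    (∀ f : List S →₀ K,
      upArrowMul deg qc qs (Finsupp.single ([] : List S) 1) f = f ∧
      upArrowMul deg qc qs f (Finsupp.single ([] : List S) 1) = f) ∧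
    (∀ w₁ w₂ : List S, ∀ w ∈ (upArrow (K := K) deg qc qs w₁ w₂).support,
      degw deg w = degw deg w₁ + degw deg w₂) := by
  refine ⟨fun f g h => ?_, fun f => ⟨?_, ?_⟩, fun w₁ w₂ => upArrow_graded deg qc qs hdeg w₁ w₂⟩
  · simp only [upArrowMul_eq]
    exact Bmap_assoc deg qc qs hdeg f g h
  · rw [upArrowMul_eq, Bmap_one_left]
  · rw [upArrowMul_eq, Bmap_one_right]
end

section
/- In a monoid (M, ⋆, 1) arising as words of monomials with shifted concatenation: a word w = m₁.m₂.···.m_l ∈ M⁺ is reducible (i.e. w = u ⋆ v with u,v ≠ 1) if and only if there exists 0 < k < l such that every index occurring in m₁···m_k is strictly smaller than every index occurring in m_{k+1}···m_l. -/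
/-- A non-trivial monomial over the commutative alphabet `X = {x_i}_{i ≥ 1}`:
a nonzero finitely supported exponent function whose support consists of indices `≥ 1`. -/
def Mon : Type := {m : ℕ →₀ ℕ // m ≠ 0 ∧ ∀ i ∈ m.support, 1 ≤ i}

/-- The translation `T_n : x_i ↦ x_{i+n}` acting on a monomial. -/
noncomputable def shiftMon (n : ℕ) (m : Mon) : Mon :=
  ⟨Finsupp.embDomain ⟨(· + n), add_left_injective n⟩ m.1, by
    constructor
    · simp [Finsupp.embDomain_eq_zero, m.2.1]
    · intro i hi
      rw [Finsupp.support_embDomain, Finset.mem_map] at hi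
      obtain ⟨j, hj, rfl⟩ := hi
      have := m.2.2 j hj
      simp only [Function.Embedding.coeFn_mk]
      omega⟩

/-- The set of variable indices occurring in a word of monomials. -/
def idxSet (w : List Mon) : Set ℕ := {i | ∃ m ∈ w, i ∈ m.1.support}

/-- The maximal variable index occurring in a word of monomials. -/
def maxIdx (w : List Mon) : ℕ := (w.map fun m => m.1.support.sup id).foldr max 0

/-- The shifted concatenation `w₁ ⋆ w₂ = w₁ · T_n(w₂)` on words of monomials,
where `n` is the maximal index of a variable occurring in `w₁`. -/
noncomputable def starMon (w₁ w₂ : List Mon) : List Mon := w₁ ++ w₂.map (shiftMon (maxIdx w₁))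

lemma le_foldr_max (l : List ℕ) (a : ℕ) (ha : a ∈ l) : a ≤ l.foldr max 0 := by
  induction l with
  | nil => simp at ha
  | cons b t ih =>
    simp only [List.foldr]
    rcases List.mem_cons.mp ha with h | h
    · subst h; exact le_max_left _ _
    · exact le_trans (ih h) (le_max_right _ _)

lemma le_maxIdx (u : List Mon) (i : ℕ) (hi : i ∈ idxSet u) : i ≤ maxIdx u := by
  obtain ⟨m, hm, hms⟩ := hi
  have h1 : i ≤ m.1.support.sup id := Finset.le_sup (f := id) hms
  have h2 : m.1.support.sup id ∈ u.map fun m => m.1.support.sup id :=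
    List.mem_map_of_mem hm
  exact h1.trans (le_foldr_max _ _ h2)

lemma sup_mem_of_nonempty (s : Finset ℕ) (h : s.Nonempty) : s.sup id ∈ s := by
  have := Finset.max'_mem s h
  rwa [Finset.max', Finset.sup'_eq_sup] at this

lemma mon_support_nonempty (m : Mon) : m.1.support.Nonempty := by
  rw [Finsupp.support_nonempty_iff]; exact m.2.1

lemma maxIdx_mem (u : List Mon) (hu : u ≠ []) : maxIdx u ∈ idxSet u := by
  have h0 : maxIdx u = 0 ∨ maxIdx u ∈ u.map fun m => m.1.support.sup id := by
    unfold maxIdx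
    generalize (u.map fun m => m.1.support.sup id) = l
    induction l with
    | nil => left; rfl
    | cons b t ih =>
      simp only [List.foldr]
      rcases Nat.le_total b (t.foldr max 0) with hb | hb
      · rw [max_eq_right hb]
        rcases ih with h | h
        · left; exact h
        · right; exact List.mem_cons_of_mem _ h
      · rw [max_eq_left hb]
        right; exact List.mem_cons_self
  have hpos : 1 ≤ maxIdx u := by
    obtain ⟨m, hm⟩ := List.exists_mem_of_ne_nil u hu
    obtain ⟨i, hi⟩ := mon_support_nonempty m
    exact le_trans (m.2.2 i hi) (le_maxIdx u i ⟨m, hm, hi⟩)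
  rcases h0 with h | h
  · omega
  · obtain ⟨m, hm, hms⟩ := List.mem_map.mp h
    exact ⟨m, hm, hms ▸ sup_mem_of_nonempty _ (mon_support_nonempty m)⟩

noncomputable def unshiftMon (n : ℕ) (m : Mon) (h : ∀ j ∈ m.1.support, n < j) : Mon :=
  ⟨Finsupp.comapDomain (⟨(· + n), add_left_injective n⟩ : ℕ ↪ ℕ) m.1
    (Function.Embedding.injective _).injOn, by
    constructor
    · intro hz
      obtain ⟨j, hj⟩ := mon_support_nonempty m
      have hjn := h j hj
      have : (j - n) + n ∈ m.1.support := by rwa [Nat.sub_add_cancel hjn.le]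
      have : (j - n) ∈ (Finsupp.comapDomain (⟨(· + n), add_left_injective n⟩ : ℕ ↪ ℕ) m.1
          (Function.Embedding.injective _).injOn).support := by
        simpa [Finsupp.comapDomain] using this
      rw [hz] at this; simp at this
    · intro i hi
      simp only [Finsupp.comapDomain_support, Finset.mem_preimage,
        Function.Embedding.coeFn_mk] at hi
      have := h _ hi
      omega⟩

lemma shift_unshift (n : ℕ) (m : Mon) (h : ∀ j ∈ m.1.support, n < j) :
    shiftMon n (unshiftMon n m h) = m := by
  apply Subtype.ext
  show Finsupp.embDomain _ _ = m.1
  apply Finsupp.embDomain_comapDomain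
  intro j hj
  simp only [Finset.mem_coe] at hj
  exact ⟨j - n, by simp [Nat.sub_add_cancel (h j hj).le]⟩


/-- in the monoid of words of monomials with the shifted concatenation, a
nonempty word `w = m₁.m₂.⋯.m_l` is reducible iff there is `0 < k < l` such that every index
occurring in `m₁⋯m_k` is strictly smaller than every index occurring in `m_{k+1}⋯m_l`. -/
theorem reducible_iff_majoration (w : List Mon) (hw : w ≠ []) :
    (∃ u v : List Mon, u ≠ [] ∧ v ≠ [] ∧ w = starMon u v) ↔
      (∃ k : ℕ, 0 < k ∧ k < w.length ∧
        ∀ i ∈ idxSet (w.take k), ∀ j ∈ idxSet (w.drop k), i < j) := by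
  constructor
  · rintro ⟨u, v, hu, hv, rfl⟩
    refine ⟨u.length, List.length_pos_iff.mpr hu, ?_, ?_⟩
    · have : v.length ≠ 0 := fun h => hv (List.eq_nil_of_length_eq_zero h)
      simp only [starMon, List.length_append, List.length_map]
      omega
    · intro i hi j hj
      rw [starMon, List.take_left] at hi
      rw [starMon, List.drop_left] at hj
      have h1 : i ≤ maxIdx u := le_maxIdx u i hi
      obtain ⟨m', hm', hj'⟩ := hj
      obtain ⟨m, hm, rfl⟩ := List.mem_map.mp hm'
      rw [show (shiftMon (maxIdx u) m).1 = Finsupp.embDomain _ m.1 from rfl,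
        Finsupp.support_embDomain, Finset.mem_map] at hj'
      obtain ⟨j', hj'', rfl⟩ := hj'
      have := m.2.2 j' hj''
      simp only [Function.Embedding.coeFn_mk]
      omega
  · rintro ⟨k, hk0, hkl, hmaj⟩
    have htk : w.take k ≠ [] := by
      intro h
      have := congrArg List.length h
      simp only [List.length_take, List.length_nil] at this
      omega
    set n := maxIdx (w.take k) with hn
    have hmem : ∀ m ∈ w.drop k, ∀ j ∈ m.1.support, n < j := fun m hm j hj =>
      hmaj n (maxIdx_mem _ htk) j ⟨m, hm, hj⟩
    refine ⟨w.take k, (w.drop k).attach.map (fun m => unshiftMon n m.1 (hmem m.1 m.2)),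
      htk, ?_, ?_⟩
    · intro h
      have := congrArg List.length h
      simp only [List.length_map, List.length_attach, List.length_drop,
        List.length_nil] at this
      omega
    · rw [starMon, ← hn, List.map_map]
      have : ((w.drop k).attach).map
          (shiftMon n ∘ fun m => unshiftMon n m.1 (hmem m.1 m.2)) =
          ((w.drop k).attach).map Subtype.val :=
        List.map_congr_left fun a _ => shift_unshift n a.1 (hmem a.1 a.2)
      rw [this, List.attach_map_subtype_val, List.take_append_drop]
end
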